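/- The fixed field F = K(t)^σ is the field of fractions of the fixed ring 𝓕 = K[t,t⁻¹]^σ: every element of F can be written as g·h⁻¹ with g, h ∈ 𝓕 and h ≠ 0. Moreover K ⊗_k 𝓕 = K[t,t⁻¹]: for any ℓ ∈ K with ι(ℓ) ≠ ℓ, every element of the Laurent polynomial ring K[t,t⁻¹] can be written uniquely as f₀ + ℓ·f₁ with f₀, f₁ ∈ 𝓕. -/

import Mathlib

/-!
`σ` preserves the Laurent polynomials and is an involution (`σ²` fixes `K` and `t`, as `ι b = b`).
A fixed `f = p / q` with `p, q` polynomials equals `(p · σ q) / (q · σ q)`, a quotient of fixed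
Laurent polynomials. Applying `σ` to `f = f₀ + ℓ f₁` gives `σ f = f₀ + ι(ℓ) f₁`, which forces
`f₁ = (f - σ f) / (ℓ - ι ℓ)` and `f₀ = f - ℓ f₁`; these are indeed fixed Laurent polynomials.
-/

open scoped TensorProduct

/-- `f` is a Laurent polynomial: a finite sum `Σ y_z · t^z` with `y_z ∈ K`. -/
def IsLaurent {K : Type} [Field K] (f : RatFunc K) : Prop :=
  ∃ c : ℤ →₀ K, f = c.sum fun z y => algebraMap K (RatFunc K) y * RatFunc.X ^ z

open scoped LaurentPolynomial

section FixedPoints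

variable {L : Type*} [Field L] (σ : L ≃+* L)

theorem Subring.exists_fixed_div_fixed (hσ : Function.Involutive σ) (S : Subring L)
    (hS : ∀ x ∈ S, σ x ∈ S) {f p q : L} (hpS : p ∈ S) (hqS : q ∈ S) (hf : σ f = f)
    (hq : q ≠ 0) (hfpq : f = p / q) :
    ∃ g h : L, (g ∈ S ∧ σ g = g) ∧ (h ∈ S ∧ σ h = h) ∧ h ≠ 0 ∧ f = g / h := by
  have hσq : σ q ≠ 0 := (map_ne_zero σ).mpr hq
  have hp : p = f * q := by rw [hfpq, div_mul_cancel₀ _ hq]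
  refine ⟨p * σ q, q * σ q, ⟨S.mul_mem hpS (hS q hqS), ?_⟩, ⟨S.mul_mem hqS (hS q hqS), ?_⟩,
    mul_ne_zero hq hσq, ?_⟩
  · rw [hp, map_mul, map_mul, hσ, hf]; ring
  · rw [map_mul, hσ, mul_comm]
  · rw [mul_div_mul_right _ _ hσq, hfpq]

theorem eq_and_eq_of_fixed_add_mul_eq {a x₀ x₁ y₀ y₁ : L} (ha : σ a ≠ a)
    (hx₀ : σ x₀ = x₀) (hx₁ : σ x₁ = x₁) (hy₀ : σ y₀ = y₀) (hy₁ : σ y₁ = y₁)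
    (h : x₀ + a * x₁ = y₀ + a * y₁) : x₀ = y₀ ∧ x₁ = y₁ := by
  have hσh : x₀ + σ a * x₁ = y₀ + σ a * y₁ := by
    simpa only [map_add, map_mul, hx₀, hx₁, hy₀, hy₁] using congr_arg σ h
  have h₁ : (a - σ a) * (x₁ - y₁) = 0 := by linear_combination h - hσh
  have hx₁y₁ : x₁ = y₁ :=
    sub_eq_zero.mp ((mul_eq_zero.mp h₁).resolve_left (sub_ne_zero.mpr ha.symm))
  exact ⟨by linear_combination h - a * hx₁y₁, hx₁y₁⟩

theorem Subring.existsUnique_fixed_add_mul (hσ : Function.Involutive σ) (S : Subring L)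
    (hS : ∀ x ∈ S, σ x ∈ S) {a : L} (haS : a ∈ S) (ha : σ a ≠ a) (hinv : (a - σ a)⁻¹ ∈ S)
    {f : L} (hf : f ∈ S) :
    ∃! p : L × L, ((p.1 ∈ S ∧ σ p.1 = p.1) ∧ (p.2 ∈ S ∧ σ p.2 = p.2)) ∧ f = p.1 + a * p.2 := by
  have hd : a - σ a ≠ 0 := sub_ne_zero.mpr ha.symm
  set f₁ := (a - σ a)⁻¹ * (f - σ f) with hf₁
  have hf₁S : f₁ ∈ S := S.mul_mem hinv (S.sub_mem hf (hS f hf))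
  have hσf₁ : σ f₁ = f₁ := by
    rw [hf₁, map_mul, map_inv₀, map_sub, map_sub, hσ, hσ]
    field_simp
    ring
  have hσf₀ : σ (f - a * f₁) = f - a * f₁ := by
    rw [map_sub, map_mul, hσf₁, hf₁]
    field_simp
    ring
  refine ⟨(f - a * f₁, f₁), ⟨⟨⟨S.sub_mem hf (S.mul_mem haS hf₁S), hσf₀⟩, hf₁S, hσf₁⟩, by ring⟩, ?_⟩
  rintro ⟨g₀, g₁⟩ ⟨⟨⟨-, hg₀⟩, -, hg₁⟩, hg⟩
  obtain ⟨h₀, h₁⟩ := eq_and_eq_of_fixed_add_mul_eq σ ha hg₀ hg₁ hσf₀ hσf₁ (by rw [← hg]; ring)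
  exact Prod.ext h₀ h₁

end FixedPoints

namespace RatFunc

variable (K : Type) [Field K]

noncomputable def ofLaurentPolynomial : K[T;T⁻¹] →ₐ[K] RatFunc K :=
  AddMonoidAlgebra.lift K (RatFunc K) ℤ
    ((Units.coeHom (RatFunc K)).comp (zpowersHom _ (Units.mk0 X X_ne_zero)))

variable {K}

theorem isLaurent_iff_mem_range {f : RatFunc K} :
    IsLaurent f ↔ f ∈ (ofLaurentPolynomial K).range := by
  simp [IsLaurent, ofLaurentPolynomial, AddMonoidAlgebra.lift_apply', AddMonoidAlgebra.exists,
    eq_comm (a := f), Units.val_zpow_eq_zpow_val]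

theorem ofLaurentPolynomial_comp_toLaurentAlg :
    (ofLaurentPolynomial K).comp Polynomial.toLaurentAlg =
      IsScalarTower.toAlgHom K (Polynomial K) (RatFunc K) := by
  refine Polynomial.algHom_ext ?_
  simp only [ofLaurentPolynomial, AlgHom.comp_apply, Polynomial.toLaurentAlg_apply,
    Polynomial.toLaurent_X, LaurentPolynomial.T, AddMonoidAlgebra.lift_single]
  simp

theorem algebraMap_mem_range_ofLaurentPolynomial (p : Polynomial K) :
    algebraMap (Polynomial K) (RatFunc K) p ∈ (ofLaurentPolynomial K).range :=
  ⟨Polynomial.toLaurentAlg p, AlgHom.congr_fun ofLaurentPolynomial_comp_toLaurentAlg p⟩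

theorem C_mul_X_zpow_mem_range_ofLaurentPolynomial (y : K) (z : ℤ) :
    C y * X ^ z ∈ (ofLaurentPolynomial K).range :=
  isLaurent_iff_mem_range.mp
    ⟨Finsupp.single z y, by rw [Finsupp.sum_single_index (by simp), algebraMap_eq_C]⟩

variable {ι : K → K} (σ : RatFunc K →+* RatFunc K) (hσC : ∀ x, σ (C x) = C (ι x)) {c : K}
  (hσX : σ X = C c * X⁻¹)
include hσX

theorem map_X_zpow (z : ℤ) : σ (X ^ z) = C (c ^ z) * X ^ (-z) := by
  rw [map_zpow₀, hσX, mul_zpow, map_zpow₀, inv_zpow, zpow_neg]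

include hσC

theorem map_mem_range_ofLaurentPolynomial {f : RatFunc K}
    (hf : f ∈ (ofLaurentPolynomial K).range) : σ f ∈ (ofLaurentPolynomial K).range := by
  obtain ⟨c, rfl⟩ := isLaurent_iff_mem_range.mpr hf
  rw [Finsupp.sum, map_sum]
  refine Subalgebra.sum_mem _ fun z _ => ?_
  rw [map_mul, algebraMap_eq_C, hσC, map_X_zpow σ hσX, ← mul_assoc, ← map_mul]
  exact C_mul_X_zpow_mem_range_ofLaurentPolynomial _ _

theorem involutive_of_map_C_of_map_X (hι : Function.Involutive ι) (hc : ι c = c) :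
    Function.Involutive σ := by
  have hc0 : C c ≠ 0 := by
    intro h
    exact X_ne_zero ((map_eq_zero_iff σ σ.injective).mp (by rw [hσX, h, zero_mul]))
  have hσσ : σ.comp σ = RingHom.id _ := by
    refine IsLocalization.ringHom_ext (nonZeroDivisors (Polynomial K))
      (Polynomial.ringHom_ext (fun a => ?_) ?_)
    · simp [algebraMap_C, hσC, hι a]
    · simp only [RingHom.comp_apply, algebraMap_X, hσX, map_mul, map_inv₀, hσC, hc,
        RingHom.id_apply]
      field_simp
  exact fun f => congr($hσσ f)

end RatFunc

theorem F_is_fraction_field_of_fixed_Laurent_ring_general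
    -- k is a field, K/k a degree-2 Galois extension with nontrivial automorphism ι,
    -- b a nonzero element of k
    (k K : Type) [Field k] [Field K] [Algebra k K]
    (ι : K ≃ₐ[k] K)
    (hι2 : ∀ x : K, ι (ι x) = x)
    (b : k)
    -- σ is the automorphism of K(t) acting as ι on K with σ(t) = b·t⁻¹
    (σ : RatFunc K ≃+* RatFunc K)
    (hσK : ∀ x : K, σ (algebraMap K (RatFunc K) x) = algebraMap K (RatFunc K) (ι x))
    (hσt : σ RatFunc.X = algebraMap K (RatFunc K) (algebraMap k K b) * RatFunc.X⁻¹)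
    :
    -- F = K(t)^σ is the field of fractions of 𝓕 = K[t,t⁻¹]^σ
    (∀ f : RatFunc K, σ f = f →
      ∃ g h : RatFunc K, (IsLaurent g ∧ σ g = g) ∧ (IsLaurent h ∧ σ h = h) ∧
        h ≠ 0 ∧ f = g / h) ∧
    -- K ⊗_k 𝓕 = K[t,t⁻¹]: for ℓ ∈ K with ι(ℓ) ≠ ℓ, every Laurent polynomial is
    -- uniquely f₀ + ℓ·f₁ with f₀, f₁ ∈ 𝓕
    (∀ ℓ : K, ι ℓ ≠ ℓ → ∀ f : RatFunc K, IsLaurent f →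
      ∃! p : RatFunc K × RatFunc K,
        ((IsLaurent p.1 ∧ σ p.1 = p.1) ∧ (IsLaurent p.2 ∧ σ p.2 = p.2)) ∧
        f = p.1 + algebraMap K (RatFunc K) ℓ * p.2) := by
  have hσ : Function.Involutive σ :=
    RatFunc.involutive_of_map_C_of_map_X (σ : RatFunc K →+* RatFunc K) hσK hσt hι2 (ι.commutes b)
  set S := (RatFunc.ofLaurentPolynomial K).range
  have hS (f : RatFunc K) : f ∈ S → σ f ∈ S :=
    RatFunc.map_mem_range_ofLaurentPolynomial (σ : RatFunc K →+* RatFunc K) hσK hσt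
  simp only [RatFunc.isLaurent_iff_mem_range]
  refine ⟨fun f hf => ?_, fun ℓ hℓ f hf => ?_⟩
  · exact Subring.exists_fixed_div_fixed σ hσ S.toSubring hS
      (RatFunc.algebraMap_mem_range_ofLaurentPolynomial f.num)
      (RatFunc.algebraMap_mem_range_ofLaurentPolynomial f.denom) hf
      (RatFunc.algebraMap_ne_zero f.denom_ne_zero) (RatFunc.num_div_denom f).symm
  · have ha : σ (algebraMap K (RatFunc K) ℓ) ≠ algebraMap K (RatFunc K) ℓ := by
      rw [hσK]
      exact (algebraMap K (RatFunc K)).injective.ne hℓ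
    have hinv : (algebraMap K (RatFunc K) ℓ - σ (algebraMap K (RatFunc K) ℓ))⁻¹ ∈ S := by
      rw [hσK, ← map_sub, ← map_inv₀]
      exact S.algebraMap_mem _
    exact Subring.existsUnique_fixed_add_mul σ hσ S.toSubring hS (S.algebraMap_mem ℓ) ha hinv hf

theorem F_is_fraction_field_of_fixed_Laurent_ring
    -- k is a field, K/k a degree-2 Galois extension with nontrivial automorphism ι,
    -- b a nonzero element of k
    (k K : Type) [Field k] [Field K] [Algebra k K]
    (hrank : Module.finrank k K = 2)
    (ι : K ≃ₐ[k] K) (hι : ∃ x : K, ι x ≠ x)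
    (hι2 : ∀ x : K, ι (ι x) = x)
    (hfix : ∀ x : K, ι x = x → ∃ c : k, algebraMap k K c = x)
    (b : k) (hb : b ≠ 0)
    -- σ is the automorphism of K(t) acting as ι on K with σ(t) = b·t⁻¹
    (σ : RatFunc K ≃+* RatFunc K)
    (hσK : ∀ x : K, σ (algebraMap K (RatFunc K) x) = algebraMap K (RatFunc K) (ι x))
    (hσt : σ RatFunc.X = algebraMap K (RatFunc K) (algebraMap k K b) * RatFunc.X⁻¹)
    :
    -- F = K(t)^σ is the field of fractions of 𝓕 = K[t,t⁻¹]^σ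
    (∀ f : RatFunc K, σ f = f →
      ∃ g h : RatFunc K, (IsLaurent g ∧ σ g = g) ∧ (IsLaurent h ∧ σ h = h) ∧
        h ≠ 0 ∧ f = g / h) ∧
    -- K ⊗_k 𝓕 = K[t,t⁻¹]: for ℓ ∈ K with ι(ℓ) ≠ ℓ, every Laurent polynomial is
    -- uniquely f₀ + ℓ·f₁ with f₀, f₁ ∈ 𝓕
    (∀ ℓ : K, ι ℓ ≠ ℓ → ∀ f : RatFunc K, IsLaurent f →
      ∃! p : RatFunc K × RatFunc K,
        ((IsLaurent p.1 ∧ σ p.1 = p.1) ∧ (IsLaurent p.2 ∧ σ p.2 = p.2)) ∧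
        f = p.1 + algebraMap K (RatFunc K) ℓ * p.2) :=
  F_is_fraction_field_of_fixed_Laurent_ring_general k K ι hι2 b σ hσK hσt
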